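/- arXiv:1401.1519 — 3 statements merged into one kernel-verified Lean document; each statement's English description precedes it below -/
import Mathlib

section
/- For every z in the unit disk, the L² norm of the Green function of the Laplacian on 𝔻 with pole at z is at most the L² norm of the Green function with pole at 0; equivalently ∫_{𝔻} log²|(w−z)/(1−\bar z w)| dA(w) ≤ ∫_{𝔻} log²|w| dA(w). -/
/-!
Write `φ u = (u + z) / (1 + z̄ u)`; it is the automorphism of the disc inverse to
`w ↦ (w - z) / (1 - z̄ w)`. Substituting `w = φ u` turns the left-hand side into
`∫_𝔻 |φ'(u)|² log² |u| dA(u)`. On `𝔻` the superlevel sets of `log² |u|` are the punctured discs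
`0 < |u| < ρ`, and the weight `|φ'|²` gives the disc `|u| < ρ` the mass `area (φ (D_ρ))`, which
is at most `π ρ²` because `φ (D_ρ)` is a disc of radius `ρ (1 - |z|²) / (1 - ρ² |z|²) ≤ ρ`.
By the layer-cake formula, the weighted integral is at most the unweighted one.
-/

open MeasureTheory Metric Real ComplexConjugate

section HolomorphicChangeOfVariables

open Complex

variable {f f' : ℂ → ℂ} {s : Set ℂ}

theorem det_restrictScalars_toSpanSingleton (c : ℂ) :
    ((ContinuousLinearMap.toSpanSingleton ℂ c).restrictScalars ℝ).det = normSq c := by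
  simp [ContinuousLinearMap.det, LinearMap.det_restrictScalars, Algebra.norm_complex_eq]

theorem lintegral_normSq_deriv_eq_volume_image (hs : MeasurableSet s)
    (hf : ∀ x ∈ s, HasDerivWithinAt f (f' x) s x) (hinj : s.InjOn f) :
    ∫⁻ x in s, ENNReal.ofReal (normSq (f' x)) = volume (f '' s) := by
  rw [← lintegral_abs_det_fderiv_eq_addHaar_image volume hs
    (fun x hx => (hf x hx).hasFDerivWithinAt.restrictScalars ℝ) hinj]
  simp only [det_restrictScalars_toSpanSingleton, abs_of_nonneg (normSq_nonneg _)]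

theorem integral_image_eq_integral_normSq_deriv_mul (hs : MeasurableSet s)
    (hf : ∀ x ∈ s, HasDerivWithinAt f (f' x) s x) (hinj : s.InjOn f) (g : ℂ → ℝ) :
    ∫ x in f '' s, g x = ∫ x in s, normSq (f' x) * g (f x) := by
  rw [integral_image_eq_integral_abs_det_fderiv_smul volume hs
    (fun x hx => (hf x hx).hasFDerivWithinAt.restrictScalars ℝ) hinj]
  simp only [det_restrictScalars_toSpanSingleton, abs_of_nonneg (normSq_nonneg _), smul_eq_mul]

end HolomorphicChangeOfVariables

theorem lintegral_le_lintegral_of_meas_lt_le {α : Type*} [MeasurableSpace α] {μ ν : Measure α}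
    {f : α → ℝ} (hf : 0 ≤ f) (hfm : Measurable f)
    (h : ∀ t > 0, ν {x | t < f x} ≤ μ {x | t < f x}) :
    ∫⁻ x, ENNReal.ofReal (f x) ∂ν ≤ ∫⁻ x, ENNReal.ofReal (f x) ∂μ := by
  rw [lintegral_eq_lintegral_meas_lt ν (ae_of_all _ hf) hfm.aemeasurable,
    lintegral_eq_lintegral_meas_lt μ (ae_of_all _ hf) hfm.aemeasurable]
  exact setLIntegral_mono' measurableSet_Ioi h

theorem lt_log_sq_and_lt_one_iff {x t : ℝ} (hx : 0 < x) (ht : 0 ≤ t) :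
    t < log x ^ 2 ∧ x < 1 ↔ x < exp (-√t) := by
  rw [← log_lt_iff_lt_exp hx, ← log_neg_iff hx]
  constructor
  · rintro ⟨hlt, hneg⟩
    have := sqrt_lt_sqrt ht hlt
    rw [sqrt_sq_eq_abs, abs_of_neg hneg] at this
    linarith
  · intro hlt
    have hneg : log x < 0 := hlt.trans_le (neg_nonpos.2 (sqrt_nonneg t))
    refine ⟨?_, hneg⟩
    rw [← sq_sqrt ht, sq_lt_sq, abs_of_nonneg (sqrt_nonneg t), abs_of_neg hneg]
    linarith

theorem setOf_lt_log_norm_sq_inter_ball {t : ℝ} (ht : 0 < t) :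
    {u : ℂ | t < log ‖u‖ ^ 2} ∩ ball 0 1 = ball 0 (exp (-√t)) \ {0} := by
  ext u
  rcases eq_or_ne u 0 with rfl | hu
  · simp [ht.le]
  · simp [hu, lt_log_sq_and_lt_one_iff (norm_pos_iff.2 hu) ht.le]

theorem log_sq_le_four_mul_rpow_neg_one {x : ℝ} (hx0 : 0 ≤ x) (hx1 : x ≤ 1) :
    log x ^ 2 ≤ 4 * x ^ (-1 : ℝ) := by
  rcases hx0.eq_or_lt with rfl | hx
  · simp
  have hlt := abs_log_mul_self_rpow_lt x (1 / 2) hx hx1 (by norm_num)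
  have hsq : (x ^ (1 / 2 : ℝ)) ^ 2 = x := by
    rw [← rpow_natCast, ← rpow_mul hx.le]; norm_num
  rw [rpow_neg_one, ← div_eq_mul_inv, le_div_iff₀ hx]
  calc log x ^ 2 * x = |log x * x ^ (1 / 2 : ℝ)| ^ 2 := by rw [sq_abs, mul_pow, hsq]
    _ ≤ 2 ^ 2 := by
      gcongr
      exact hlt.le.trans_eq (by norm_num)
    _ = 4 := by norm_num

theorem integrableOn_log_norm_sq_ball_one :
    IntegrableOn (fun u : ℂ => log ‖u‖ ^ 2) (ball 0 1) := by
  refine integrableOn_ball_of_norm_le_rpow (μ := volume) (C := 4) (α := 1)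
    (by simp) (by simp) (ae_restrict_of_forall_mem measurableSet_ball fun u hu => ?_)
    (Measurable.aestronglyMeasurable (by fun_prop))
  rw [norm_of_nonneg (sq_nonneg _)]
  exact log_sq_le_four_mul_rpow_neg_one (norm_nonneg u) (mem_ball_zero_iff.1 hu).le

noncomputable def diskMobius (a u : ℂ) : ℂ := (u + a) / (1 + conj a * u)

section DiskMobius

open Complex

variable {a u : ℂ}

theorem normSq_lt_one_of_norm_lt_one (ha : ‖a‖ < 1) : normSq a < 1 := by
  rw [normSq_eq_norm_sq]
  exact pow_lt_one₀ (norm_nonneg a) ha two_ne_zero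

theorem normSq_one_add_conj_mul_sub_normSq_add (a u : ℂ) :
    normSq (1 + conj a * u) - normSq (u + a) = (1 - normSq a) * (1 - normSq u) := by
  simp only [normSq_apply, add_re, add_im, one_re, one_im, mul_re, mul_im, conj_re, conj_im]
  ring

theorem one_add_conj_mul_ne_zero (ha : ‖a‖ < 1) (hu : ‖u‖ < 1) : 1 + conj a * u ≠ 0 := by
  have : ‖conj a * u‖ < 1 := by
    rw [norm_mul, RCLike.norm_conj]
    nlinarith [norm_nonneg a, norm_nonneg u]
  intro h
  rw [eq_neg_of_add_eq_zero_right h, norm_neg, norm_one] at this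
  exact this.false

theorem norm_diskMobius_lt_one (ha : ‖a‖ < 1) (hu : ‖u‖ < 1) : ‖diskMobius a u‖ < 1 := by
  have hnum : normSq (u + a) < normSq (1 + conj a * u) := by
    have := normSq_one_add_conj_mul_sub_normSq_add a u
    nlinarith [mul_pos (sub_pos.2 (normSq_lt_one_of_norm_lt_one ha))
      (sub_pos.2 (normSq_lt_one_of_norm_lt_one hu))]
  rw [diskMobius, norm_div, div_lt_one (norm_pos_iff.2 (one_add_conj_mul_ne_zero ha hu))]
  simpa only [normSq_eq_norm_sq, sq_lt_sq, abs_norm] using hnum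

theorem diskMobius_neg_diskMobius (ha : ‖a‖ < 1) (hu : ‖u‖ < 1) :
    diskMobius (-a) (diskMobius a u) = u := by
  have hd : 1 + u * conj a ≠ 0 := mul_comm u (conj a) ▸ one_add_conj_mul_ne_zero ha hu
  have ha' : (1 : ℂ) - conj a * a ≠ 0 := by
    rw [← normSq_eq_conj_mul_self, ← ofReal_one, ← ofReal_sub, ofReal_ne_zero, sub_ne_zero]
    exact (normSq_lt_one_of_norm_lt_one ha).ne'
  rw [diskMobius, diskMobius, map_neg]
  field_simp
  rw [show 1 + u * conj a + -((u + a) * conj a) = 1 - conj a * a by ring, div_eq_iff ha']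
  ring

theorem hasDerivAt_diskMobius (ha : ‖a‖ < 1) (hu : ‖u‖ < 1) :
    HasDerivAt (diskMobius a) ((1 - normSq a) / (1 + conj a * u) ^ 2) u := by
  have := ((hasDerivAt_id u).add_const a).div
    (((hasDerivAt_id u).const_mul (conj a)).const_add 1) (one_add_conj_mul_ne_zero ha hu)
  refine this.congr_deriv ?_
  rw [normSq_eq_conj_mul_self]
  simp only [id, mul_one, one_mul]
  ring

theorem differentiableAt_diskMobius (ha : ‖a‖ < 1) (hu : ‖u‖ < 1) :
    DifferentiableAt ℂ (diskMobius a) u :=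
  (hasDerivAt_diskMobius ha hu).differentiableAt

theorem diskMobius_image_ball_one (ha : ‖a‖ < 1) : diskMobius a '' ball 0 1 = ball 0 1 := by
  refine subset_antisymm ?_ fun w hw => ?_
  · rintro _ ⟨u, hu, rfl⟩
    exact mem_ball_zero_iff.2 (norm_diskMobius_lt_one ha (mem_ball_zero_iff.1 hu))
  · have ha' : ‖-a‖ < 1 := by rwa [norm_neg]
    have hw' := mem_ball_zero_iff.1 hw
    refine ⟨diskMobius (-a) w, mem_ball_zero_iff.2 (norm_diskMobius_lt_one ha' hw'), ?_⟩
    simpa only [neg_neg] using diskMobius_neg_diskMobius ha' hw'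

theorem injOn_diskMobius (ha : ‖a‖ < 1) : Set.InjOn (diskMobius a) (ball 0 1) := by
  intro u hu v hv huv
  rw [← diskMobius_neg_diskMobius ha (mem_ball_zero_iff.1 hu), huv,
    diskMobius_neg_diskMobius ha (mem_ball_zero_iff.1 hv)]

theorem diskMobius_ofReal_mul {ρ : ℝ} (v : ℂ) (hv : 1 + conj (ρ * a) * v ≠ 0)
    (hρa : 1 - ρ ^ 2 * normSq a ≠ 0) :
    diskMobius a (ρ * v) = ((1 - ρ ^ 2) / (1 - ρ ^ 2 * normSq a) : ℝ) * a
      + (ρ * (1 - normSq a) / (1 - ρ ^ 2 * normSq a) : ℝ) * diskMobius (ρ * a) v := by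
  have hρa' : (1 : ℂ) - ρ ^ 2 * a * conj a ≠ 0 := by
    rw [mul_assoc, mul_comm a, ← normSq_eq_conj_mul_self]; exact_mod_cast hρa
  have hv' : 1 + ρ * v * conj a ≠ 0 := by rw [map_mul, conj_ofReal] at hv; convert hv using 1; ring
  simp only [diskMobius, map_mul, conj_ofReal]
  push_cast
  rw [normSq_eq_conj_mul_self]
  field_simp
  ring

theorem diskMobius_image_ball_subset (ha : ‖a‖ < 1) {ρ : ℝ} (hρ0 : 0 < ρ) (hρ1 : ρ ≤ 1) :
    diskMobius a '' ball 0 ρ ⊆ ball (((1 - ρ ^ 2) / (1 - ρ ^ 2 * normSq a) : ℝ) * a)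
      (ρ * (1 - normSq a) / (1 - ρ ^ 2 * normSq a)) := by
  have ha2 : 0 < 1 - normSq a := sub_pos.2 (normSq_lt_one_of_norm_lt_one ha)
  have hρa : 0 < 1 - ρ ^ 2 * normSq a := by
    linarith [mul_le_of_le_one_left (normSq_nonneg a) (pow_le_one₀ (n := 2) hρ0.le hρ1)]
  have hρa' : ‖(ρ : ℂ) * a‖ < 1 := by
    rw [norm_mul, norm_real, norm_of_nonneg hρ0.le]; nlinarith [norm_nonneg a]
  rintro _ ⟨u, hu, rfl⟩
  have hv : ‖u / ρ‖ < 1 := by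
    rw [norm_div, norm_real, norm_of_nonneg hρ0.le, div_lt_one hρ0]
    exact mem_ball_zero_iff.1 hu
  have hu' : u = ρ * (u / ρ) := (mul_div_cancel₀ u (ofReal_ne_zero.2 hρ0.ne')).symm
  rw [hu', diskMobius_ofReal_mul _ (one_add_conj_mul_ne_zero hρa' hv) hρa.ne', mem_ball_iff_norm,
    add_sub_cancel_left, norm_mul, norm_real, norm_of_nonneg (by positivity)]
  exact mul_lt_of_lt_one_right (by positivity) (norm_diskMobius_lt_one hρa' hv)

theorem volume_diskMobius_image_ball_le (ha : ‖a‖ < 1) {ρ : ℝ} (hρ0 : 0 < ρ) (hρ1 : ρ ≤ 1) :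
    volume (diskMobius a '' ball 0 ρ) ≤ volume (ball (0 : ℂ) ρ) := by
  have ha2 := normSq_lt_one_of_norm_lt_one ha
  refine (measure_mono (diskMobius_image_ball_subset ha hρ0 hρ1)).trans ?_
  rw [Measure.addHaar_ball_center]
  refine measure_mono (ball_subset_ball ?_)
  have hρ2 : ρ ^ 2 * normSq a ≤ normSq a :=
    mul_le_of_le_one_left (normSq_nonneg a) (pow_le_one₀ (n := 2) hρ0.le hρ1)
  rw [div_le_iff₀ (by linarith)]
  exact mul_le_mul_of_nonneg_left (by linarith) hρ0.le

end DiskMobius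

section DiskMobiusJacobian

variable {a : ℂ}

theorem lintegral_normSq_deriv_diskMobius_ball_le (ha : ‖a‖ < 1) {ρ : ℝ} (hρ0 : 0 < ρ)
    (hρ1 : ρ ≤ 1) :
    ∫⁻ u in ball 0 ρ, ENNReal.ofReal (Complex.normSq (deriv (diskMobius a) u))
      ≤ volume (ball (0 : ℂ) ρ) := by
  rw [lintegral_normSq_deriv_eq_volume_image measurableSet_ball
    (fun u hu => (differentiableAt_diskMobius ha
      ((mem_ball_zero_iff.1 hu).trans_le hρ1)).hasDerivAt.hasDerivWithinAt)
    ((injOn_diskMobius ha).mono (ball_subset_ball hρ1))]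
  exact volume_diskMobius_image_ball_le ha hρ0 hρ1

theorem lintegral_normSq_deriv_diskMobius_mul_log_sq_le (ha : ‖a‖ < 1) :
    ∫⁻ u in ball 0 1,
        ENNReal.ofReal (Complex.normSq (deriv (diskMobius a) u)) * ENNReal.ofReal (log ‖u‖ ^ 2)
      ≤ ∫⁻ u in ball (0 : ℂ) 1, ENNReal.ofReal (log ‖u‖ ^ 2) := by
  have hmeas : Measurable fun u : ℂ => log ‖u‖ ^ 2 := by fun_prop
  refine (lintegral_withDensity_eq_lintegral_mul _ (by fun_prop)
    hmeas.ennreal_ofReal).symm.trans_le ?_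
  refine lintegral_le_lintegral_of_meas_lt_le (fun u => sq_nonneg _) hmeas fun t ht => ?_
  have hS : MeasurableSet {u : ℂ | t < log ‖u‖ ^ 2} := measurableSet_lt measurable_const hmeas
  rw [withDensity_apply _ hS, Measure.restrict_restrict hS, Measure.restrict_apply hS,
    setOf_lt_log_norm_sq_inter_ball ht, measure_sdiff_null (measure_singleton 0)]
  exact (lintegral_mono_set Set.sdiff_subset).trans
    (lintegral_normSq_deriv_diskMobius_ball_le ha (exp_pos _)
      (exp_le_one_iff.2 (neg_nonpos.2 (sqrt_nonneg t))))

theorem integral_normSq_deriv_diskMobius_mul_log_sq_le (ha : ‖a‖ < 1) :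
    ∫ u in ball 0 1, Complex.normSq (deriv (diskMobius a) u) * log ‖u‖ ^ 2
      ≤ ∫ u in ball (0 : ℂ) 1, log ‖u‖ ^ 2 := by
  rw [integral_eq_lintegral_of_nonneg_ae
      (f := fun u => Complex.normSq (deriv (diskMobius a) u) * log ‖u‖ ^ 2)
      (ae_of_all _ fun u => mul_nonneg (Complex.normSq_nonneg _) (sq_nonneg _))
      (Measurable.aestronglyMeasurable (by fun_prop)),
    integral_eq_lintegral_of_nonneg_ae (ae_of_all _ fun u => by positivity)
      (Measurable.aestronglyMeasurable (by fun_prop))]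
  refine ENNReal.toReal_mono integrableOn_log_norm_sq_ball_one.lintegral_lt_top.ne ?_
  simpa only [ENNReal.ofReal_mul (Complex.normSq_nonneg _)] using
    lintegral_normSq_deriv_diskMobius_mul_log_sq_le ha

end DiskMobiusJacobian

/-- For every z in the unit disk, the L² norm of the Green function with pole at z
is at most that of the Green function with pole at 0. -/
theorem green_fn_L2_max_at_zero (z : ℂ) (hz : z ∈ ball (0 : ℂ) 1) :
    ∫ w in ball (0 : ℂ) 1, (Real.log ‖(w - z) / (1 - (starRingEnd ℂ) z * w)‖) ^ 2
      ≤ ∫ w in ball (0 : ℂ) 1, (Real.log ‖w‖) ^ 2 := by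
  have hz' : ‖z‖ < 1 := mem_ball_zero_iff.1 hz
  have hmob (w : ℂ) : (w - z) / (1 - conj z * w) = diskMobius (-z) w := by
    simp [diskMobius, sub_eq_add_neg]
  calc _ = ∫ u in ball (0 : ℂ) 1, Complex.normSq (deriv (diskMobius z) u) * log ‖u‖ ^ 2 := by
        conv_lhs => rw [← diskMobius_image_ball_one hz']
        rw [integral_image_eq_integral_normSq_deriv_mul measurableSet_ball
          (fun u hu => (differentiableAt_diskMobius hz'
            (mem_ball_zero_iff.1 hu)).hasDerivAt.hasDerivWithinAt) (injOn_diskMobius hz')]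
        refine setIntegral_congr_fun measurableSet_ball fun u hu => ?_
        rw [hmob, diskMobius_neg_diskMobius hz' (mem_ball_zero_iff.1 hu)]
    _ ≤ ∫ u in ball (0 : ℂ) 1, log ‖u‖ ^ 2 := integral_normSq_deriv_diskMobius_mul_log_sq_le hz'
end

section
/- For the disk D_R of radius R centered at p ∈ ℂ, ∬_{D_R × D_R} |g(ξ,τ)|² dA(ξ) dA(τ) ≤ R⁴/4, where g is the Green function of the Laplacian on D_R. -/
/-!
Put `a = τ - p`, `b = ξ - p` and `s = R² - |a|²`. The identity
`|R² - ā b|² = R² |b - a|² + (R² - |a|²)(R² - |b|²)` gives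
`(2π g)² = ¼ log² (1 + (R² - |a|²)(R² - |b|²) / (R² |ξ - τ|²)) ≤ ¼ log² (1 + s / |ξ - τ|²)`.
Integrating the right-hand side over all `ξ ∈ ℂ` in polar coordinates about `τ`, and bounding
`log (1 + s / r²)` by `1 + 2 log (√s / r)` for `r ≤ √s` and by `s / r²` for `r ≥ √s`, the inner
integral is at most `3 s / (8π)`. Integrating `3 (R² - |τ - p|²) / (8π)` over the disk gives
`3 R⁴ / 16 ≤ R⁴ / 4`.
-/

open MeasureTheory Metric Real Set ComplexConjugate

theorem integrableOn_and_setIntegral_le_of_le {α : Type*} [MeasurableSpace α] {μ : Measure α}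
    {f g : α → ℝ} {s : Set α} (hs : MeasurableSet s) (hf : AEStronglyMeasurable f (μ.restrict s))
    (hf0 : ∀ x ∈ s, 0 ≤ f x) (hfg : ∀ x ∈ s, f x ≤ g x) (hg : IntegrableOn g s μ) :
    IntegrableOn f s μ ∧ ∫ x in s, f x ∂μ ≤ ∫ x in s, g x ∂μ := by
  have hfi : IntegrableOn f s μ := hg.mono' hf <| ae_restrict_of_forall_mem hs fun x hx => by
    rw [norm_of_nonneg (hf0 x hx)]
    exact hfg x hx
  exact ⟨hfi, setIntegral_mono_on hfi hg hs hfg⟩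

namespace Complex

variable {E : Type*} [NormedAddCommGroup E] [NormedSpace ℝ E]

theorem integral_fun_norm (f : ℝ → E) :
    ∫ z : ℂ, f ‖z‖ = (2 * π) • ∫ r in Ioi 0, r • f r := by
  rw [integral_fun_norm_addHaar volume f, finrank_real_complex, measureReal_def,
    Complex.volume_ball]
  simp [mul_smul, ofNat_smul_eq_nsmul]

theorem integrable_fun_norm_iff {f : ℝ → E} :
    Integrable (fun z : ℂ => f ‖z‖) ↔ IntegrableOn (fun r => r • f r) (Ioi 0) := by
  simpa [finrank_real_complex] using integrable_fun_norm_addHaar (volume : Measure ℂ) (f := f)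

theorem setIntegral_ball_fun_norm_sub (f : ℝ → E) (p : ℂ) (R : ℝ) :
    ∫ z in ball p R, f ‖z - p‖ = (2 * π) • ∫ r in Ioo 0 R, r • f r := by
  have hind : ∀ z : ℂ, (ball p R).indicator (fun z => f ‖z - p‖) z
      = (Iio R).indicator f ‖z - p‖ := by
    intro z
    simp [indicator, dist_eq_norm]
  rw [← integral_indicator measurableSet_ball, funext hind,
    integral_sub_right_eq_self (fun z => (Iio R).indicator f ‖z‖) p, integral_fun_norm,
    ← Ioi_inter_Iio, ← setIntegral_indicator measurableSet_Iio]
  congr 2 with r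
  by_cases hr : r < R <;> simp [hr]

theorem norm_sub_conj_mul_sq (t : ℝ) (a b : ℂ) :
    ‖(t : ℂ) - conj a * b‖ ^ 2 = t * ‖b - a‖ ^ 2 + (t - ‖a‖ ^ 2) * (t - ‖b‖ ^ 2) := by
  simp only [← normSq_eq_norm_sq, normSq_apply, sub_re, sub_im, mul_re, mul_im, conj_re, conj_im,
    ofReal_re, ofReal_im]
  ring

end Complex

theorem integrableOn_and_integral_Ioc_mul_one_add_two_mul_log_sub_sq {c : ℝ} (hc : 0 < c) :
    IntegrableOn (fun r => r * (1 + 2 * (log c - log r)) ^ 2) (Ioc 0 c) ∧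
      ∫ r in Ioc 0 c, r * (1 + 2 * (log c - log r)) ^ 2 = 5 * c ^ 2 / 2 := by
  set H : ℝ → ℝ := fun r => 2 * (r * log c - r * log r) ^ 2
    + 4 * r * (r * log c - r * log r) + 5 / 2 * r ^ 2
  have hcont : ContinuousOn H (Icc 0 c) := by
    have := continuous_mul_log
    fun_prop
  have hderiv : ∀ r ∈ Ioo 0 c, HasDerivAt H (r * (1 + 2 * (log c - log r)) ^ 2) r := by
    intro r hr
    have hw : HasDerivAt (fun r => r * log c - r * log r) (log c - log r - 1) r :=
      ((hasDerivAt_mul_const (log c)).sub (hasDerivAt_mul_log hr.1.ne')).congr_deriv (by ring)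
    refine ((((hw.pow 2).const_mul 2).add (((hasDerivAt_id r).const_mul 4).mul hw)).add
      ((hasDerivAt_pow 2 r).const_mul (5 / 2))).congr_deriv ?_
    simp only [id, Nat.cast_ofNat]
    ring
  have hint := intervalIntegral.integrableOn_deriv_of_nonneg hcont hderiv
    fun r hr => mul_nonneg hr.1.le (sq_nonneg _)
  refine ⟨hint, ?_⟩
  rw [← intervalIntegral.integral_of_le hc.le, intervalIntegral.integral_eq_sub_of_hasDerivAt_of_le
    hc.le hcont hderiv ((intervalIntegrable_iff_integrableOn_Ioc_of_le hc.le).2 hint)]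
  simp only [H, sub_self, mul_zero, pow_two, zero_mul, sub_zero, add_zero, log_zero]
  ring

theorem log_one_add_sq_div_sq_nonneg (c r : ℝ) : 0 ≤ log (1 + c ^ 2 / r ^ 2) :=
  log_nonneg (le_add_of_nonneg_right (by positivity))

theorem log_one_add_sq_div_sq_le {r c : ℝ} (hr : 0 < r) (hrc : r ≤ c) :
    log (1 + c ^ 2 / r ^ 2) ≤ 1 + 2 * (log c - log r) := by
  have hc : 0 < c := hr.trans_le hrc
  have h1 : 1 ≤ c ^ 2 / r ^ 2 := (one_le_div (by positivity)).2 (by gcongr)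
  calc log (1 + c ^ 2 / r ^ 2) ≤ log (2 * (c ^ 2 / r ^ 2)) := by gcongr; linarith
    _ = log 2 + 2 * (log c - log r) := by
        rw [log_mul two_ne_zero (by positivity), log_div (by positivity) (by positivity),
          log_pow, log_pow]
        push_cast
        ring
    _ ≤ 1 + 2 * (log c - log r) := by linarith [log_two_lt_d9]

theorem integrableOn_and_integral_Ioc_mul_sq_log_one_add_le {c : ℝ} (hc : 0 < c) :
    IntegrableOn (fun r => r * log (1 + c ^ 2 / r ^ 2) ^ 2) (Ioc 0 c) ∧
      ∫ r in Ioc 0 c, r * log (1 + c ^ 2 / r ^ 2) ^ 2 ≤ 5 * c ^ 2 / 2 := by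
  obtain ⟨hg, hg_eq⟩ := integrableOn_and_integral_Ioc_mul_one_add_two_mul_log_sub_sq hc
  rw [← hg_eq]
  exact integrableOn_and_setIntegral_le_of_le measurableSet_Ioc (by fun_prop)
    (fun r hr => mul_nonneg hr.1.le (sq_nonneg _))
    (fun r hr => mul_le_mul_of_nonneg_left (pow_le_pow_left₀ (log_one_add_sq_div_sq_nonneg c r)
      (log_one_add_sq_div_sq_le hr.1 hr.2) 2) hr.1.le) hg

theorem integrableOn_and_integral_Ioi_mul_sq_log_one_add_le {c : ℝ} (hc : 0 < c) :
    IntegrableOn (fun r => r * log (1 + c ^ 2 / r ^ 2) ^ 2) (Ioi c) ∧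
      ∫ r in Ioi c, r * log (1 + c ^ 2 / r ^ 2) ^ 2 ≤ c ^ 2 / 2 := by
  have htail : ∫ r in Ioi c, c ^ 4 * r ^ (-3 : ℝ) = c ^ 2 / 2 := by
    rw [integral_const_mul, integral_Ioi_rpow_of_lt (by norm_num) hc,
      show (-3 + 1 : ℝ) = -2 by norm_num, rpow_neg hc.le, rpow_two]
    field_simp
  rw [← htail]
  refine integrableOn_and_setIntegral_le_of_le measurableSet_Ioi (by fun_prop)
    (fun r hr => mul_nonneg (hc.trans hr).le (sq_nonneg _)) (fun r hr => ?_)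
    ((integrableOn_Ioi_rpow_of_lt (by norm_num) hc).const_mul _)
  have hr : 0 < r := hc.trans hr
  have hlog : log (1 + c ^ 2 / r ^ 2) ≤ c ^ 2 / r ^ 2 := by
    linarith [log_le_sub_one_of_pos (show 0 < 1 + c ^ 2 / r ^ 2 by positivity)]
  calc r * log (1 + c ^ 2 / r ^ 2) ^ 2 ≤ r * (c ^ 2 / r ^ 2) ^ 2 :=
        mul_le_mul_of_nonneg_left (pow_le_pow_left₀ (log_one_add_sq_div_sq_nonneg c r) hlog 2) hr.le
    _ = c ^ 4 * r ^ (-3 : ℝ) := by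
        rw [rpow_neg hr.le, show (3 : ℝ) = (3 : ℕ) by norm_num, rpow_natCast]
        field_simp

theorem integrableOn_and_integral_Ioi_zero_mul_sq_log_one_add_le {s : ℝ} (hs : 0 < s) :
    IntegrableOn (fun r => r * log (1 + s / r ^ 2) ^ 2) (Ioi 0) ∧
      ∫ r in Ioi 0, r * log (1 + s / r ^ 2) ^ 2 ≤ 3 * s := by
  obtain ⟨c, hc, rfl⟩ : ∃ c, 0 < c ∧ c ^ 2 = s := ⟨√s, sqrt_pos.2 hs, sq_sqrt hs.le⟩
  obtain ⟨hint₁, hle₁⟩ := integrableOn_and_integral_Ioc_mul_sq_log_one_add_le hc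
  obtain ⟨hint₂, hle₂⟩ := integrableOn_and_integral_Ioi_mul_sq_log_one_add_le hc
  rw [← Ioc_union_Ioi_eq_Ioi hc.le,
    setIntegral_union (Ioc_disjoint_Ioi le_rfl) measurableSet_Ioi hint₁ hint₂]
  exact ⟨hint₁.union hint₂, by linarith⟩

theorem setIntegral_ball_sq_sub_norm_sub_sq (p : ℂ) {R : ℝ} (hR : 0 ≤ R) :
    ∫ τ in ball p R, (R ^ 2 - ‖τ - p‖ ^ 2) = π * R ^ 4 / 2 := by
  rw [Complex.setIntegral_ball_fun_norm_sub (fun r => R ^ 2 - r ^ 2),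
    ← integral_Ioc_eq_integral_Ioo, ← intervalIntegral.integral_of_le hR]
  have hpoly : (fun r : ℝ => r • (R ^ 2 - r ^ 2)) = fun r => R ^ 2 * r - r ^ 3 := by
    ext r
    rw [smul_eq_mul]
    ring
  rw [hpoly, intervalIntegral.integral_sub (intervalIntegral.intervalIntegrable_id.const_mul _)
    (intervalIntegral.intervalIntegrable_pow 3), intervalIntegral.integral_const_mul]
  simp
  ring

noncomputable def diskGreen (p : ℂ) (R : ℝ) (ξ τ : ℂ) : ℝ :=
  (1 / (2 * π)) * log ‖R * (ξ - τ) / (R ^ 2 - conj (τ - p) * (ξ - p))‖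

theorem sq_log_norm_div_sub_conj_mul_le {R : ℝ} (hR : 0 < R) {a b : ℂ} (ha : ‖a‖ ≤ R)
    (hb : ‖b‖ ≤ R) :
    log ‖R * (b - a) / (R ^ 2 - conj a * b)‖ ^ 2
      ≤ log (1 + (R ^ 2 - ‖a‖ ^ 2) / ‖b - a‖ ^ 2) ^ 2 / 4 := by
  rcases eq_or_ne b a with rfl | hba
  · simp
  have hr : 0 < ‖b - a‖ := norm_pos_iff.2 (sub_ne_zero.2 hba)
  have hs : 0 ≤ R ^ 2 - ‖a‖ ^ 2 := by nlinarith [norm_nonneg a]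
  have hs' : 0 ≤ R ^ 2 - ‖b‖ ^ 2 := by nlinarith [norm_nonneg b]
  set x := ‖R * (b - a) / (R ^ 2 - conj a * b)‖
  have hinv : (x ^ 2)⁻¹
      = 1 + (R ^ 2 - ‖a‖ ^ 2) * (R ^ 2 - ‖b‖ ^ 2) / (R ^ 2 * ‖b - a‖ ^ 2) := by
    have hD := Complex.norm_sub_conj_mul_sq (R ^ 2) a b
    push_cast at hD
    simp only [x, norm_div, norm_mul, Complex.norm_real, norm_of_nonneg hR.le, div_pow, mul_pow,
      hD, inv_div]
    field_simp
  have hle : (x ^ 2)⁻¹ ≤ 1 + (R ^ 2 - ‖a‖ ^ 2) / ‖b - a‖ ^ 2 := by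
    rw [hinv, add_le_add_iff_left, div_le_div_iff₀ (by positivity) (by positivity)]
    nlinarith [mul_nonneg hs (sq_nonneg ‖b - a‖), sq_nonneg ‖b‖]
  have hone : 1 ≤ (x ^ 2)⁻¹ := by
    rw [hinv, le_add_iff_nonneg_right]
    positivity
  calc log x ^ 2 = log (x ^ 2)⁻¹ ^ 2 / 4 := by rw [log_inv, log_pow]; ring
    _ ≤ _ := by gcongr; exact log_nonneg hone

theorem diskGreen_sq_le {p : ℂ} {R : ℝ} (hR : 0 < R) {ξ τ : ℂ} (hξ : ‖ξ - p‖ ≤ R)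
    (hτ : ‖τ - p‖ ≤ R) :
    diskGreen p R ξ τ ^ 2 ≤ log (1 + (R ^ 2 - ‖τ - p‖ ^ 2) / ‖ξ - τ‖ ^ 2) ^ 2 / (16 * π ^ 2) := by
  have h := sq_log_norm_div_sub_conj_mul_le hR hτ hξ
  rw [sub_sub_sub_cancel_right] at h
  calc diskGreen p R ξ τ ^ 2
      = log ‖R * (ξ - τ) / (R ^ 2 - conj (τ - p) * (ξ - p))‖ ^ 2 / (4 * π ^ 2) := by
        rw [diskGreen]
        field_simp
        ring
    _ ≤ log (1 + (R ^ 2 - ‖τ - p‖ ^ 2) / ‖ξ - τ‖ ^ 2) ^ 2 / 4 / (4 * π ^ 2) := by gcongr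
    _ = _ := by ring

theorem integral_diskGreen_sq_le {p : ℂ} {R : ℝ} (hR : 0 < R) {τ : ℂ} (hτ : ‖τ - p‖ < R) :
    ∫ ξ in ball p R, diskGreen p R ξ τ ^ 2 ≤ 3 * (R ^ 2 - ‖τ - p‖ ^ 2) / (8 * π) := by
  set s := R ^ 2 - ‖τ - p‖ ^ 2
  have hs : 0 < s := by nlinarith [norm_nonneg (τ - p)]
  set F : ℝ → ℝ := fun r => log (1 + s / r ^ 2) ^ 2
  obtain ⟨hint, hle⟩ := integrableOn_and_integral_Ioi_zero_mul_sq_log_one_add_le hs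
  have hF : Integrable fun ξ : ℂ => F ‖ξ - τ‖ / (16 * π ^ 2) :=
    ((Complex.integrable_fun_norm_iff.2 hint).comp_sub_right τ).div_const _
  calc ∫ ξ in ball p R, diskGreen p R ξ τ ^ 2
      ≤ ∫ ξ in ball p R, F ‖ξ - τ‖ / (16 * π ^ 2) := by
        refine integral_mono_of_nonneg (ae_of_all _ fun ξ => sq_nonneg _) hF.integrableOn
          (ae_restrict_of_forall_mem measurableSet_ball fun ξ hξ => ?_)
        rw [mem_ball, dist_eq_norm] at hξ
        exact diskGreen_sq_le hR hξ.le hτ.le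
    _ ≤ ∫ ξ, F ‖ξ - τ‖ / (16 * π ^ 2) :=
        setIntegral_le_integral hF (ae_of_all _ fun ξ => by positivity)
    _ = 2 * π * (∫ r in Ioi 0, r * F r) / (16 * π ^ 2) := by
        rw [integral_div, integral_sub_right_eq_self (fun z => F ‖z‖), Complex.integral_fun_norm]
        simp only [smul_eq_mul]
    _ ≤ 2 * π * (3 * s) / (16 * π ^ 2) := by gcongr
    _ = 3 * s / (8 * π) := by field_simp; ring

/-- For the disk D_R of radius R centered at p, the double integral of the squared
Green function is at most R⁴/4. -/
theorem green_fn_double_integral_disk (p : ℂ) (R : ℝ) (hR : 0 < R) :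
    ∫ τ in ball p R, ∫ ξ in ball p R,
        ((1 / (2 * π)) * Real.log (‖
          (R * (ξ - τ) / (R ^ 2 - (starRingEnd ℂ) (τ - p) * (ξ - p)))‖)) ^ 2
      ≤ R ^ 4 / 4 := by
  have hdom : IntegrableOn (fun τ : ℂ => 3 * (R ^ 2 - ‖τ - p‖ ^ 2) / (8 * π)) (ball p R) :=
    (ContinuousOn.integrableOn_compact (isCompact_closedBall p R) (by fun_prop)).mono_set
      ball_subset_closedBall
  calc ∫ τ in ball p R, ∫ ξ in ball p R, diskGreen p R ξ τ ^ 2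
      ≤ ∫ τ in ball p R, 3 * (R ^ 2 - ‖τ - p‖ ^ 2) / (8 * π) := by
        refine integral_mono_of_nonneg (ae_of_all _ fun τ => integral_nonneg fun ξ => sq_nonneg _)
          hdom (ae_restrict_of_forall_mem measurableSet_ball fun τ hτ => ?_)
        rw [mem_ball, dist_eq_norm] at hτ
        exact integral_diskGreen_sq_le hR hτ
    _ = 3 * (π * R ^ 4 / 2) / (8 * π) := by
        rw [integral_div, integral_const_mul, setIntegral_ball_sq_sub_norm_sub_sq p hR.le]
    _ ≤ R ^ 4 / 4 := by
        field_simp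
        linarith [pow_pos hR 4]
end

section
/- For z ∈ 𝔻 with z ≠ 0, ∫_{𝔻} g_z(ξ) g_0(ξ) dA(ξ) = (1 − |z|²(1 − log|z|))/(8π), where g_z and g_0 are the Green functions of the Laplacian on the unit disk with poles at z and 0. -/
/-!
In polar coordinates the integral becomes `2π ∫₀¹ r · M(r) dr`, where `M(r)` is the mean of
`g_z g_0` over the circle `|ξ| = r`. On that circle `g_0 = (log r)/(2π)` is constant, and
`2π g_z(ξ) = log|ξ - z| - log|1 - z̄ξ|`: the first term averages to `log max(r, |z|)` (Jensen) and
the second is harmonic on a neighbourhood of the closed disk of radius `r`, so it averages to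
`log 1 = 0`. What is left is the elementary integral `∫₀¹ r log r log max(r, |z|) dr`.
-/

open MeasureTheory Metric Real Set InnerProductSpace

noncomputable def greenDisk (z ξ : ℂ) : ℝ :=
  (1 / (2 * π)) * log ‖(ξ - z) / (1 - starRingEnd ℂ z * ξ)‖

theorem greenDisk_zero_left (ξ : ℂ) : greenDisk 0 ξ = (1 / (2 * π)) * log ‖ξ‖ := by
  simp [greenDisk]

theorem measurable_greenDisk (z : ℂ) : Measurable (greenDisk z) := by
  unfold greenDisk
  fun_prop

theorem norm_sub_le_norm_one_sub_conj_mul {z ξ : ℂ} (hz : ‖z‖ ≤ 1) (hξ : ‖ξ‖ ≤ 1) :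
    ‖ξ - z‖ ≤ ‖1 - starRingEnd ℂ z * ξ‖ := by
  have key : Complex.normSq (1 - starRingEnd ℂ z * ξ) - Complex.normSq (ξ - z)
      = (1 - Complex.normSq z) * (1 - Complex.normSq ξ) := by
    simp only [Complex.normSq_apply, Complex.sub_re, Complex.sub_im, Complex.mul_re,
      Complex.mul_im, Complex.one_re, Complex.one_im, Complex.conj_re, Complex.conj_im]
    ring
  have hz' : Complex.normSq z ≤ 1 := by
    rw [← Complex.sq_norm]; exact pow_le_one₀ (norm_nonneg _) hz
  have hξ' : Complex.normSq ξ ≤ 1 := by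
    rw [← Complex.sq_norm]; exact pow_le_one₀ (norm_nonneg _) hξ
  rw [Complex.norm_def, Complex.norm_def]
  exact sqrt_le_sqrt (by nlinarith [mul_nonneg (sub_nonneg.2 hz') (sub_nonneg.2 hξ')])

theorem greenDisk_nonpos {z ξ : ℂ} (hz : ‖z‖ ≤ 1) (hξ : ‖ξ‖ ≤ 1) : greenDisk z ξ ≤ 0 :=
  mul_nonpos_of_nonneg_of_nonpos (by positivity) <| log_nonpos (norm_nonneg _) <| by
    rw [norm_div]
    exact div_le_one_of_le₀ (norm_sub_le_norm_one_sub_conj_mul hz hξ) (norm_nonneg _)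

theorem greenDisk_mul_greenDisk_zero_nonneg {z ξ : ℂ} (hz : ‖z‖ ≤ 1) (hξ : ‖ξ‖ ≤ 1) :
    0 ≤ greenDisk z ξ * greenDisk 0 ξ :=
  mul_nonneg_of_nonpos_of_nonpos (greenDisk_nonpos hz hξ) (greenDisk_nonpos (by simp) hξ)

theorem circleAverage_log_norm_sub_const_eq_log_max (a : ℂ) {r : ℝ} (hr : 0 < r) :
    circleAverage (fun ξ ↦ log ‖ξ - a‖) 0 r = log (max r ‖a‖) := by
  rw [circleAverage_log_norm_sub_const_eq_log_radius_add_posLog hr.ne', zero_sub, norm_neg]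
  rcases le_or_gt ‖a‖ r with h | h
  · rw [max_eq_left h, add_eq_left, posLog_eq_zero_iff, abs_of_nonneg (by positivity)]
    exact inv_mul_le_one_of_le₀ h hr.le
  · have ha : 0 < ‖a‖ := hr.trans h
    have h1 : 1 ≤ |r⁻¹ * ‖a‖| := by
      rw [abs_of_pos (by positivity)]; exact (one_le_inv_mul₀ hr).2 h.le
    rw [max_eq_right h.le, posLog_eq_log h1, log_mul (inv_ne_zero hr.ne') ha.ne', log_inv]
    ring

theorem circleAverage_log_norm_one_sub_mul {w : ℂ} {r : ℝ} (h : ‖w‖ * |r| < 1) :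
    circleAverage (fun ξ ↦ log ‖1 - w * ξ‖) 0 r = 0 := by
  have harm : HarmonicOnNhd (fun ξ ↦ log ‖1 - w * ξ‖) (closedBall 0 |r|) := by
    intro ξ hξ
    refine AnalyticAt.harmonicAt_log_norm (by fun_prop) (sub_ne_zero.2 fun h1 ↦ ?_)
    have : ‖w * ξ‖ < 1 := by
      rw [norm_mul]
      exact lt_of_le_of_lt (by gcongr; simpa using hξ) h
    rw [← h1, norm_one] at this
    exact this.false
  simp [harm.circleAverage_eq]

theorem circleAverage_greenDisk {z : ℂ} {r : ℝ} (hr : 0 < r) (hzr : ‖z‖ * r < 1)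
    (hrz : r ≠ ‖z‖) : circleAverage (greenDisk z) 0 r = (2 * π)⁻¹ * log (max r ‖z‖) := by
  have hw : ‖starRingEnd ℂ z‖ * |r| < 1 := by rwa [Complex.norm_conj, abs_of_pos hr]
  have hsphere : EqOn (greenDisk z)
      (fun ξ ↦ (2 * π)⁻¹ • (log ‖ξ - z‖ - log ‖1 - starRingEnd ℂ z * ξ‖)) (sphere 0 |r|) := by
    intro ξ hξ
    rw [mem_sphere_zero_iff_norm, abs_of_pos hr] at hξ
    have hnum : ξ - z ≠ 0 := fun h ↦ hrz (by rw [← hξ, sub_eq_zero.1 h])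
    have hden : 1 - starRingEnd ℂ z * ξ ≠ 0 := by
      refine sub_ne_zero.2 fun h ↦ ?_
      have : ‖starRingEnd ℂ z * ξ‖ = 1 := by rw [← h, norm_one]
      rw [norm_mul, Complex.norm_conj, hξ] at this
      exact hzr.ne this
    simp only [greenDisk, smul_eq_mul, one_div, norm_div]
    rw [log_div (norm_ne_zero_iff.2 hnum) (norm_ne_zero_iff.2 hden)]
  rw [circleAverage_congr_sphere hsphere, circleAverage_fun_smul,
    circleAverage_fun_sub (circleIntegrable_log_norm_sub_const r)
      (MeromorphicOn.circleIntegrable_log_norm fun _ _ ↦ by fun_prop),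
    circleAverage_log_norm_sub_const_eq_log_max z hr, circleAverage_log_norm_one_sub_mul hw,
    sub_zero, smul_eq_mul]

theorem circleIntegrable_greenDisk (z c : ℂ) (r : ℝ) : CircleIntegrable (greenDisk z) c r :=
  (MeromorphicOn.circleIntegrable_log_norm (f := fun ξ ↦ (ξ - z) / (1 - starRingEnd ℂ z * ξ))
    fun _ _ ↦ by fun_prop).const_smul (a := 1 / (2 * π))

theorem circleAverage_greenDisk_mul_greenDisk_zero {z : ℂ} {r : ℝ} (hr : 0 < r)
    (hzr : ‖z‖ * r < 1) (hrz : r ≠ ‖z‖) :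
    circleAverage (fun ξ ↦ greenDisk z ξ * greenDisk 0 ξ) 0 r
      = (2 * π)⁻¹ ^ 2 * (log r * log (max r ‖z‖)) := by
  have hsphere : EqOn (fun ξ ↦ greenDisk z ξ * greenDisk 0 ξ)
      (fun ξ ↦ ((2 * π)⁻¹ * log r) • greenDisk z ξ) (sphere 0 |r|) := by
    intro ξ hξ
    rw [mem_sphere_zero_iff_norm, abs_of_pos hr] at hξ
    simp only [greenDisk_zero_left, hξ, smul_eq_mul, one_div]
    ring
  rw [circleAverage_congr_sphere hsphere, circleAverage_fun_smul,
    circleAverage_greenDisk hr hzr hrz, smul_eq_mul]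
  ring

theorem circleIntegrable_greenDisk_mul_greenDisk_zero (z : ℂ) {r : ℝ} (hr : r ≠ 0) :
    CircleIntegrable (fun ξ ↦ greenDisk z ξ * greenDisk 0 ξ) 0 r := by
  refine (circleIntegrable_greenDisk z 0 r).fun_mul_continuousOn ?_
  rw [show greenDisk 0 = fun ξ ↦ 1 / (2 * π) * log ‖ξ‖ from funext greenDisk_zero_left]
  refine continuousOn_const.mul (continuous_norm.continuousOn.log fun ξ hξ ↦ ?_)
  simpa [mem_sphere_zero_iff_norm.1 hξ] using hr

theorem Complex.polarCoord_symm_eq_circleMap (p : ℝ × ℝ) :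
    Complex.polarCoord.symm p = circleMap 0 p.1 p.2 := by
  rw [Complex.polarCoord_symm_apply, circleMap_zero, Complex.exp_mul_I]
  push_cast
  ring

theorem continuous_circleMap_zero_uncurry :
    Continuous fun p : ℝ × ℝ ↦ circleMap 0 p.1 p.2 := by
  unfold circleMap
  fun_prop

theorem setIntegral_ball_zero_eq_setIntegral_polar {E : Type*} [NormedAddCommGroup E]
    [NormedSpace ℝ E] (f : ℂ → E) (R : ℝ) :
    ∫ ξ in ball (0 : ℂ) R, f ξ
      = ∫ p in Ioo 0 R ×ˢ Ioo (-π) π, p.1 • f (circleMap 0 p.1 p.2) := by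
  have hpolar : polarCoord.target ∩ (fun p : ℝ × ℝ ↦ circleMap 0 p.1 p.2) ⁻¹' ball 0 R
      = Ioo 0 R ×ˢ Ioo (-π) π := by
    ext ⟨r, θ⟩
    simp only [polarCoord_target, mem_inter_iff, mem_prod, mem_Ioi, mem_preimage,
      mem_ball_zero_iff, norm_circleMap_zero, mem_Ioo]
    constructor
    · rintro ⟨⟨hr, hθ⟩, hR⟩
      exact ⟨⟨hr, by rwa [abs_of_pos hr] at hR⟩, hθ⟩
    · rintro ⟨⟨hr, hR⟩, hθ⟩
      exact ⟨⟨hr, hθ⟩, by rwa [abs_of_pos hr]⟩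
  rw [← integral_indicator measurableSet_ball, ← Complex.integral_comp_polarCoord_symm,
    funext Complex.polarCoord_symm_eq_circleMap, ← hpolar,
    ← setIntegral_indicator
      (measurableSet_ball.preimage continuous_circleMap_zero_uncurry.measurable)]
  refine setIntegral_congr_fun polarCoord.open_target.measurableSet fun p _ ↦ ?_
  by_cases h : circleMap 0 p.1 p.2 ∈ ball 0 R <;> simp [h]

theorem setIntegral_Ioo_circleMap_eq_circleAverage {E : Type*} [NormedAddCommGroup E]
    [NormedSpace ℝ E] (f : ℂ → E) (c : ℂ) (R : ℝ) :
    ∫ θ in Ioo (-π) π, f (circleMap c R θ) = (2 * π) • circleAverage f c R := by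
  rw [circleAverage_eq_integral_add (-π), smul_inv_smul₀ (by positivity),
    intervalIntegral.integral_comp_add_right (fun θ ↦ f (circleMap c R θ)),
    intervalIntegral.integral_of_le (by linarith [pi_pos]), integral_Ioc_eq_integral_Ioo]
  ring_nf

theorem CircleIntegrable.integrableOn_Ioo_neg_pi_pi {E : Type*} [NormedAddCommGroup E] {f : ℂ → E}
    {c : ℂ} {R : ℝ} (hf : CircleIntegrable f c R) :
    IntegrableOn (fun θ ↦ f (circleMap c R θ)) (Ioo (-π) π) :=
  (((periodic_circleMap c R).comp f).intervalIntegrable₀ (by positivity) hf (-π) π).1.mono_set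
    Ioo_subset_Ioc_self

-- Nonnegativity lets Tonelli deduce integrability in polar coordinates from that of the radial
-- profile `r ↦ r * circleAverage f 0 r`.
theorem setIntegral_ball_zero_eq_integral_circleAverage_of_nonneg {f : ℂ → ℝ} {R : ℝ}
    (hf : Measurable f) (hnn : ∀ ξ ∈ ball (0 : ℂ) R, 0 ≤ f ξ)
    (hcirc : ∀ᵐ r ∂volume.restrict (Ioo 0 R), CircleIntegrable f 0 r)
    (hint : IntegrableOn (fun r ↦ r * circleAverage f 0 r) (Ioo 0 R)) :
    ∫ ξ in ball (0 : ℂ) R, f ξ = 2 * π * ∫ r in Ioo 0 R, r * circleAverage f 0 r := by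
  set g : ℝ × ℝ → ℝ := fun p ↦ p.1 • f (circleMap 0 p.1 p.2)
  have hinner (r : ℝ) : ∫ θ in Ioo (-π) π, g (r, θ) = 2 * π * (r * circleAverage f 0 r) := by
    simp only [g, smul_eq_mul]
    rw [integral_const_mul, setIntegral_Ioo_circleMap_eq_circleAverage, smul_eq_mul]
    ring
  have hg : IntegrableOn g (Ioo 0 R ×ˢ Ioo (-π) π) (volume.prod volume) := by
    rw [IntegrableOn, ← Measure.prod_restrict, integrable_prod_iff]
    · refine ⟨hcirc.mono fun r hr ↦ hr.integrableOn_Ioo_neg_pi_pi.const_mul r, ?_⟩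
      refine (hint.const_mul (2 * π)).congr ?_
      filter_upwards [ae_restrict_mem measurableSet_Ioo] with r hr
      rw [← hinner]
      refine setIntegral_congr_fun measurableSet_Ioo fun θ _ ↦ (Real.norm_of_nonneg ?_).symm
      exact mul_nonneg hr.1.le (hnn _ (by simp [abs_of_pos hr.1, hr.2]))
    · exact (measurable_fst.mul
        (hf.comp continuous_circleMap_zero_uncurry.measurable)).aestronglyMeasurable
  rw [setIntegral_ball_zero_eq_setIntegral_polar, Measure.volume_eq_prod, setIntegral_prod g hg]
  simp_rw [hinner]
  rw [integral_const_mul]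

-- The primitives are written through `x * log x`, so that their continuity at `0` is
-- `continuous_mul_log`.
theorem hasDerivAt_mul_log_primitive {r : ℝ} (hr : r ≠ 0) :
    HasDerivAt (fun x ↦ x * (x * log x) / 2 - x ^ 2 / 4) (r * log r) r :=
  ((((hasDerivAt_id' r).mul (hasDerivAt_mul_log hr)).div_const 2).sub
    ((hasDerivAt_pow 2 r).div_const 4)).congr_deriv (by push_cast; ring)

theorem hasDerivAt_mul_log_sq_primitive {r : ℝ} (hr : r ≠ 0) :
    HasDerivAt (fun x ↦ (x * log x) ^ 2 / 2 - x * (x * log x) / 2 + x ^ 2 / 4)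
      (r * log r ^ 2) r :=
  (((((hasDerivAt_mul_log hr).pow 2).div_const 2).sub
    (((hasDerivAt_id' r).mul (hasDerivAt_mul_log hr)).div_const 2)).add
    ((hasDerivAt_pow 2 r).div_const 4)).congr_deriv (by push_cast; ring)

theorem continuous_mul_log_primitive :
    Continuous fun x : ℝ ↦ x * (x * log x) / 2 - x ^ 2 / 4 :=
  ((continuous_id.mul continuous_mul_log).div_const 2).sub (by fun_prop)

theorem continuous_mul_log_sq_primitive :
    Continuous fun x : ℝ ↦ (x * log x) ^ 2 / 2 - x * (x * log x) / 2 + x ^ 2 / 4 :=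
  (((continuous_mul_log.pow 2).div_const 2).sub
    ((continuous_id.mul continuous_mul_log).div_const 2)).add (by fun_prop)

theorem integral_mul_log {a : ℝ} (ha : 0 ≤ a) :
    ∫ r in 0..a, r * log r = a ^ 2 / 2 * log a - a ^ 2 / 4 := by
  rw [intervalIntegral.integral_eq_sub_of_hasDerivAt_of_le ha
    continuous_mul_log_primitive.continuousOn (fun r hr ↦ hasDerivAt_mul_log_primitive hr.1.ne')
    (continuous_mul_log.intervalIntegrable 0 a)]
  ring

theorem intervalIntegrable_mul_log_sq {b : ℝ} (hb : 0 ≤ b) :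
    IntervalIntegrable (fun r ↦ r * log r ^ 2) volume 0 b := by
  refine intervalIntegral.intervalIntegrable_deriv_of_nonneg
    continuous_mul_log_sq_primitive.continuousOn (fun r hr ↦ ?_) (fun r hr ↦ ?_) <;>
    rw [min_eq_left hb, max_eq_right hb] at hr
  · exact hasDerivAt_mul_log_sq_primitive hr.1.ne'
  · have := hr.1.le
    positivity

theorem integral_mul_log_sq {b : ℝ} (hb : 0 ≤ b) :
    ∫ r in 0..b, r * log r ^ 2 = b ^ 2 / 2 * log b ^ 2 - b ^ 2 / 2 * log b + b ^ 2 / 4 := by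
  rw [intervalIntegral.integral_eq_sub_of_hasDerivAt_of_le hb
    continuous_mul_log_sq_primitive.continuousOn
    (fun r hr ↦ hasDerivAt_mul_log_sq_primitive hr.1.ne') (intervalIntegrable_mul_log_sq hb)]
  simp only [log_zero]
  ring

section LogMax

variable {a : ℝ}

theorem mul_log_mul_log_max_eqOn_left (ha : 0 ≤ a) :
    EqOn (fun r ↦ r * log r * log (max r a)) (fun r ↦ log a * (r * log r)) (uIcc 0 a) := by
  intro r hr
  rw [uIcc_of_le ha] at hr
  simp only [max_eq_right hr.2]
  ring

theorem mul_log_mul_log_max_eqOn_right (ha : a ≤ 1) :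
    EqOn (fun r ↦ r * log r * log (max r a)) (fun r ↦ r * log r ^ 2) (uIcc a 1) := by
  intro r hr
  rw [uIcc_of_le ha] at hr
  simp only [max_eq_left hr.1]
  ring

theorem intervalIntegrable_mul_log_mul_log_max (ha0 : 0 ≤ a) (ha1 : a ≤ 1) :
    IntervalIntegrable (fun r ↦ r * log r * log (max r a)) volume 0 1 := by
  have ha : a ∈ uIcc (0 : ℝ) 1 := by rw [uIcc_of_le zero_le_one]; exact ⟨ha0, ha1⟩
  refine IntervalIntegrable.trans (b := a) ?_ ?_
  · refine (intervalIntegrable_congr ((mul_log_mul_log_max_eqOn_left ha0).mono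
      uIoc_subset_uIcc)).2 ?_
    exact (continuous_mul_log.intervalIntegrable 0 a).const_mul (log a)
  · refine (intervalIntegrable_congr ((mul_log_mul_log_max_eqOn_right ha1).mono
      uIoc_subset_uIcc)).2 ?_
    exact (intervalIntegrable_mul_log_sq zero_le_one).mono_set
      (uIcc_subset_uIcc ha right_mem_uIcc)

theorem integral_mul_log_mul_log_max (ha0 : 0 ≤ a) (ha1 : a ≤ 1) :
    ∫ r in 0..1, r * log r * log (max r a) = (1 - a ^ 2 * (1 - log a)) / 4 := by
  have ha : a ∈ uIcc (0 : ℝ) 1 := by rw [uIcc_of_le zero_le_one]; exact ⟨ha0, ha1⟩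
  have hint := intervalIntegrable_mul_log_mul_log_max ha0 ha1
  rw [← intervalIntegral.integral_add_adjacent_intervals
      (hint.mono_set (uIcc_subset_uIcc left_mem_uIcc ha))
      (hint.mono_set (uIcc_subset_uIcc ha right_mem_uIcc)),
    intervalIntegral.integral_congr (mul_log_mul_log_max_eqOn_left ha0),
    intervalIntegral.integral_congr (mul_log_mul_log_max_eqOn_right ha1),
    intervalIntegral.integral_const_mul, integral_mul_log ha0,
    ← intervalIntegral.integral_interval_sub_left (intervalIntegrable_mul_log_sq zero_le_one)
      (intervalIntegrable_mul_log_sq ha0),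
    integral_mul_log_sq zero_le_one, integral_mul_log_sq ha0, log_one]
  ring

end LogMax

theorem green_fn_product_integral_general (z : ℂ) (hz : z ∈ ball (0 : ℂ) 1) :
    ∫ ξ in ball (0 : ℂ) 1,
        ((1 / (2 * π)) * Real.log ‖(ξ - z) / (1 - (starRingEnd ℂ) z * ξ)‖) *
          ((1 / (2 * π)) * Real.log ‖ξ‖)
      = (1 - ‖z‖ ^ 2 * (1 - Real.log ‖z‖)) / (8 * π) := by
  have hz1 : ‖z‖ < 1 := mem_ball_zero_iff.1 hz
  have hmean : (fun r ↦ r * circleAverage (fun ξ ↦ greenDisk z ξ * greenDisk 0 ξ) 0 r)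
      =ᵐ[volume.restrict (Ioo 0 1)] fun r ↦ (2 * π)⁻¹ ^ 2 * (r * log r * log (max r ‖z‖)) := by
    filter_upwards [ae_restrict_mem measurableSet_Ioo,
      ae_restrict_of_ae (compl_mem_ae_iff.2 (measure_singleton ‖z‖))] with r hr hrz
    rw [circleAverage_greenDisk_mul_greenDisk_zero hr.1
      (mul_lt_one_of_nonneg_of_lt_one_left (norm_nonneg z) hz1 hr.2.le) hrz]
    ring
  have hint : IntegrableOn (fun r ↦ r * log r * log (max r ‖z‖)) (Ioo 0 1) :=
    (intervalIntegrable_iff_integrableOn_Ioo_of_le zero_le_one).1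
      (intervalIntegrable_mul_log_mul_log_max (norm_nonneg z) hz1.le)
  calc _ = ∫ ξ in ball (0 : ℂ) 1, greenDisk z ξ * greenDisk 0 ξ := by
        simp only [greenDisk_zero_left]
        rfl
    _ = 2 * π * ∫ r in Ioo 0 1, (2 * π)⁻¹ ^ 2 * (r * log r * log (max r ‖z‖)) := by
        rw [← integral_congr_ae hmean]
        exact setIntegral_ball_zero_eq_integral_circleAverage_of_nonneg
          ((measurable_greenDisk z).mul (measurable_greenDisk 0))
          (fun ξ hξ ↦ greenDisk_mul_greenDisk_zero_nonneg hz1.le (mem_ball_zero_iff.1 hξ).le)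
          ((ae_restrict_mem measurableSet_Ioo).mono fun r hr ↦
            circleIntegrable_greenDisk_mul_greenDisk_zero z hr.1.ne')
          ((hint.const_mul _).congr hmean.symm)
    _ = _ := by
        rw [integral_const_mul, ← integral_Ioc_eq_integral_Ioo,
          ← intervalIntegral.integral_of_le zero_le_one,
          integral_mul_log_mul_log_max (norm_nonneg z) hz1.le]
        field_simp
        ring

/-- For z ∈ 𝔻 with z ≠ 0, ∫_𝔻 g_z g_0 dA = (1 − |z|²(1 − log|z|))/(8π). -/
theorem green_fn_product_integral (z : ℂ) (hz : z ∈ ball (0 : ℂ) 1) (hz0 : z ≠ 0) :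
    ∫ ξ in ball (0 : ℂ) 1,
        ((1 / (2 * π)) * Real.log ‖(ξ - z) / (1 - (starRingEnd ℂ) z * ξ)‖) *
          ((1 / (2 * π)) * Real.log ‖ξ‖)
      = (1 - ‖z‖ ^ 2 * (1 - Real.log ‖z‖)) / (8 * π) :=
  green_fn_product_integral_general z hz
end
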